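/- arXiv:2209.03556 — 2 statements merged into one kernel-verified Lean document; each statement's English description precedes it below -/
import Mathlib

section
/- For real numbers φ₁, φ₂, φ₃, φ₄ that are the first four moments of a probability distribution on (0,∞) (so all positive, satisfying the Cauchy–Schwarz relations), the quantity 2φ₁²φ₄ + 2φ₂³ − 4φ₁φ₂φ₃ is nonnegative. More precisely, if φⱼ = ∫ t^j dH(t) for a probability measure H supported on a compact subset of (0,∞), then 2φ₁²φ₄ + 2φ₂³ − 4φ₁φ₂φ₃ ≥ 0. -/
open MeasureTheory

/-- If `H` is a probability measure supported on a compact subset of `(0,∞)` with moments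
`φⱼ = ∫ t^j dH(t)`, then `2φ₁²φ₄ + 2φ₂³ − 4φ₁φ₂φ₃ ≥ 0`. -/
theorem moment_combination_nonneg (H : Measure ℝ) [IsProbabilityMeasure H]
    (a b : ℝ) (ha : 0 < a) (hsupp : ∀ᵐ t ∂H, t ∈ Set.Icc a b)
    (φ : ℕ → ℝ) (hφ : ∀ j, φ j = ∫ t, t ^ j ∂H) :
    0 ≤ 2 * (φ 1) ^ 2 * φ 4 + 2 * (φ 2) ^ 3 - 4 * φ 1 * φ 2 * φ 3 := by
  have hab : a ≤ b := by
    by_contra h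
    push_neg at h
    rw [Set.Icc_eq_empty (not_le.mpr h)] at hsupp
    have h0 : H = 0 := by
      have := hsupp
      simp only [Set.mem_empty_iff_false] at this
      simpa using this
    exact (IsProbabilityMeasure.ne_zero H) h0
  have hb : 0 < b := ha.trans_le hab
  have hInt : ∀ j : ℕ, Integrable (fun t : ℝ => t ^ j) H := by
    intro j
    refine (integrable_const (b ^ j)).mono' ((measurable_id.pow_const j).aestronglyMeasurable) ?_
    filter_upwards [hsupp] with t ht
    have h0 : 0 ≤ t := le_trans ha.le ht.1
    simpa [Real.norm_eq_abs, abs_of_nonneg h0] using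
      pow_le_pow_left₀ h0 ht.2 j
  have hmom : ∀ j : ℕ, a ^ j ≤ φ j := by
    intro j
    rw [hφ]
    calc a ^ j = ∫ _, a ^ j ∂H := by simp
      _ ≤ ∫ t, t ^ j ∂H := by
          refine integral_mono_ae (integrable_const _) (hInt j) ?_
          filter_upwards [hsupp] with t ht
          exact pow_le_pow_left₀ ha.le ht.1 j
  have h2 : 0 < φ 2 := lt_of_lt_of_le (pow_pos ha 2) (hmom 2)
  have h4 : 0 < φ 4 := lt_of_lt_of_le (pow_pos ha 4) (hmom 4)
  have hcomp : ∫ t, ((φ 3) ^ 2 * t ^ 4 - (2 * φ 3 * φ 4) * t ^ 3 + (φ 4) ^ 2 * t ^ 2) ∂H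
      = (φ 3) ^ 2 * φ 4 - (2 * φ 3 * φ 4) * φ 3 + (φ 4) ^ 2 * φ 2 := by
    have e4 : Integrable (fun t : ℝ => (φ 3) ^ 2 * t ^ 4) H := (hInt 4).const_mul _
    have e3 : Integrable (fun t : ℝ => (2 * φ 3 * φ 4) * t ^ 3) H := (hInt 3).const_mul _
    have e2 : Integrable (fun t : ℝ => (φ 4) ^ 2 * t ^ 2) H := (hInt 2).const_mul _
    have e43 : Integrable (fun t : ℝ => (φ 3) ^ 2 * t ^ 4 - (2 * φ 3 * φ 4) * t ^ 3) H :=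
      e4.sub e3
    rw [integral_add e43 e2, integral_sub e4 e3,
      integral_const_mul, integral_const_mul, integral_const_mul,
      ← hφ 4, ← hφ 3, ← hφ 2]
  have key : 0 ≤ (φ 3) ^ 2 * φ 4 - (2 * φ 3 * φ 4) * φ 3 + (φ 4) ^ 2 * φ 2 := by
    rw [← hcomp]
    calc (0:ℝ) ≤ ∫ t, (φ 3 * t ^ 2 - φ 4 * t) ^ 2 ∂H :=
          integral_nonneg fun t => sq_nonneg _
      _ = _ := integral_congr_ae (Filter.Eventually.of_forall fun t => by ring)
  have hcs : (φ 3) ^ 2 ≤ φ 2 * φ 4 := by nlinarith [key, h4]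
  nlinarith [sq_nonneg (φ 1 * φ 3 - (φ 2) ^ 2), h2,
    mul_nonneg (sq_nonneg (φ 1)) (sub_nonneg.mpr hcs)]
end

section
/- Let x = ξ Σ^{1/2} u with ξ ≥ 0, E(ξ²) = p, E(ξ⁴) < ∞, u uniform on the unit sphere of ℝ^p independent of ξ, and Σ positive semidefinite. Then Var(‖x‖²) = [E(ξ⁴)/(p(p+2)) − 1]·tr(Σ)² + 2·[E(ξ⁴)/(p(p+2))]·tr(Σ²). -/
open MeasureTheory ProbabilityTheory Matrix

/-- A probability measure on vectors is the uniform distribution on the unit sphere: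
it is a probability measure, concentrated on the unit sphere, and invariant under
every orthogonal transformation. -/
def IsUniformOnSphere {p : ℕ} (μ : MeasureTheory.Measure (Fin p → ℝ)) : Prop :=
  MeasureTheory.IsProbabilityMeasure μ ∧
  (∀ᵐ x ∂μ, dotProduct x x = 1) ∧
  ∀ Q : Matrix (Fin p) (Fin p) ℝ, Q ∈ Matrix.orthogonalGroup (Fin p) ℝ →
    μ.map (fun x => Q.mulVec x) = μ

/-- The positive semidefinite square root of a positive semidefinite matrix
(as defined in the older Mathlib, where it was `Matrix.PosSemidef.sqrt`). -/
noncomputable def Matrix.PosSemidef.sqrt {n 𝕜 : Type*} [Fintype n] [DecidableEq n] [RCLike 𝕜] [PartialOrder 𝕜]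
    {A : Matrix n n 𝕜} (hA : A.PosSemidef) : Matrix n n 𝕜 :=
  hA.1.eigenvectorUnitary.1 * diagonal ((↑) ∘ (√·) ∘ hA.1.eigenvalues) *
    (star hA.1.eigenvectorUnitary : Matrix n n 𝕜)

/-!
Diagonalising `Σ = U D Uᵀ` gives `‖x‖² = ξ² ∑ₖ dₖ wₖ²` with `w = Uᵀ u`, which is again uniform on
the sphere and independent of `ξ`. Independence turns the variance into
`E ξ⁴ · E q² - (E ξ² · E q)²` for `q = ∑ₖ dₖ wₖ²`, so everything reduces to the sphere moments
`E wᵢ² = 1/p` and `E wᵢ² wⱼ² = (1 + 2 δᵢⱼ)/(p(p+2))`. These follow from orthogonal invariance alone: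
coordinate permutations make them independent of the indices, `∑ⱼ wⱼ² = 1` fixes their row sums,
and a reflection mixing coordinates `i` and `j` gives `E wᵢ⁴ = 3 E wᵢ² wⱼ²`.
-/

open Finset

section Householder
variable {ι K : Type*} [Fintype ι] [DecidableEq ι] [Field K]


def householder (n : ι → K) : Matrix ι ι K := 1 - (2 / (n ⬝ᵥ n)) • vecMulVec n n

theorem transpose_householder (n : ι → K) : (householder n)ᵀ = householder n := by
  simp [householder, transpose_vecMulVec]

theorem householder_mul_self {n : ι → K} (hn : n ⬝ᵥ n ≠ 0) :
    householder n * householder n = 1 := by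
  have h : (2 / (n ⬝ᵥ n)) * (2 / (n ⬝ᵥ n)) * (n ⬝ᵥ n) = 2 / (n ⬝ᵥ n) + 2 / (n ⬝ᵥ n) := by
    field_simp; ring
  simp only [householder, sub_mul, mul_sub, one_mul, mul_one, smul_mul_smul_comm,
    vecMulVec_mul_vecMulVec, vecMulVec_smul, smul_smul, h, add_smul]
  abel

theorem householder_mem_orthogonalGroup {n : ι → K} (hn : n ⬝ᵥ n ≠ 0) :
    householder n ∈ orthogonalGroup ι K := by
  rw [mem_orthogonalGroup_iff, transpose_householder, householder_mul_self hn]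

theorem householder_mulVec (n v : ι → K) :
    householder n *ᵥ v = v - (2 * (n ⬝ᵥ v) / (n ⬝ᵥ n)) • n := by
  simp [householder, sub_mulVec, smul_mulVec, vecMulVec_mulVec, smul_smul, mul_div_right_comm]

end Householder

theorem dotProduct_mulVec_self_of_mem_orthogonalGroup {ι R : Type*} [Fintype ι] [DecidableEq ι]
    [CommRing R] {U : Matrix ι ι R} (hU : U ∈ orthogonalGroup ι R) (y : ι → R) :
    (U *ᵥ y) ⬝ᵥ (U *ᵥ y) = y ⬝ᵥ y := by
  rw [dotProduct_mulVec, ← mulVec_transpose, mulVec_mulVec, (mem_orthogonalGroup_iff' ι R).mp hU,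
    one_mulVec]

theorem mem_orthogonalGroup_of_mem_unitaryGroup {ι : Type*} [Fintype ι] [DecidableEq ι]
    {U : Matrix ι ι ℝ} (hU : U ∈ unitaryGroup ι ℝ) : U ∈ orthogonalGroup ι ℝ := by
  rw [mem_orthogonalGroup_iff, ← conjTranspose_eq_transpose_of_trivial, ← star_eq_conjTranspose]
  exact mem_unitaryGroup_iff.mp hU

namespace Matrix.IsHermitian

variable {ι 𝕜 : Type*} [Fintype ι] [DecidableEq ι] [RCLike 𝕜] {A : Matrix ι ι 𝕜}

theorem trace_mul_self (hA : A.IsHermitian) :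
    (A * A).trace = ∑ i, (hA.eigenvalues i : 𝕜) ^ 2 := by
  conv_lhs => rw [hA.spectral_theorem, ← map_mul, Unitary.conjStarAlgAut_apply, trace_mul_cycle,
    Unitary.coe_star_mul_self, one_mul, diagonal_mul_diagonal, trace_diagonal]
  simp [sq]

end Matrix.IsHermitian

namespace Matrix.PosSemidef

variable {ι : Type*} [Fintype ι] [DecidableEq ι] {S : Matrix ι ι ℝ}

theorem dotProduct_sqrt_mulVec_self (hS : S.PosSemidef) (v : ι → ℝ) :
    (hS.sqrt *ᵥ v) ⬝ᵥ (hS.sqrt *ᵥ v) =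
      ∑ k, hS.1.eigenvalues k * (star (hS.1.eigenvectorUnitary : Matrix ι ι ℝ) *ᵥ v) k ^ 2 := by
  rw [sqrt, ← mulVec_mulVec, ← mulVec_mulVec, dotProduct_mulVec_self_of_mem_orthogonalGroup
    (mem_orthogonalGroup_of_mem_unitaryGroup hS.1.eigenvectorUnitary.2)]
  refine sum_congr rfl fun k _ => ?_
  simp only [mulVec_diagonal, Function.comp_apply, RCLike.ofReal_real_eq_id, id]
  rw [mul_mul_mul_comm, Real.mul_self_sqrt (hS.eigenvalues_nonneg k), sq]

end Matrix.PosSemidef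

theorem isCompact_setOf_dotProduct_self_eq_one (ι : Type*) [Fintype ι] :
    IsCompact {x : ι → ℝ | x ⬝ᵥ x = 1} := by
  refine Metric.isCompact_of_isClosed_isBounded
    (isClosed_eq (by fun_prop) continuous_const) ?_
  refine (Metric.isBounded_closedBall (x := (0 : ι → ℝ)) (r := 1)).subset fun x hx => ?_
  rw [mem_closedBall_zero_iff, pi_norm_le_iff_of_nonneg zero_le_one]
  intro i
  rw [Real.norm_eq_abs, ← sq_le_one_iff_abs_le_one]
  calc x i ^ 2 = x i * x i := sq _
    _ ≤ x ⬝ᵥ x :=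
      single_le_sum (f := fun j => x j * x j) (fun j _ => mul_self_nonneg _) (mem_univ i)
    _ = 1 := hx

namespace IsUniformOnSphere

variable {p : ℕ} {μ : Measure (Fin p → ℝ)} (hμ : IsUniformOnSphere μ)
include hμ

theorem pos : 0 < p := by
  have := hμ.1
  obtain ⟨x, hx⟩ := hμ.2.1.exists
  exact Nat.pos_of_ne_zero (by rintro rfl; simp at hx)

theorem integrable_of_continuous {f : (Fin p → ℝ) → ℝ} (hf : Continuous f) : Integrable f μ := by
  have := hμ.1
  rw [← Measure.restrict_eq_self_of_ae_mem hμ.2.1]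
  exact hf.continuousOn.integrableOn_compact (isCompact_setOf_dotProduct_self_eq_one _)

theorem integral_comp_mulVec {Q : Matrix (Fin p) (Fin p) ℝ} (hQ : Q ∈ orthogonalGroup (Fin p) ℝ)
    {f : (Fin p → ℝ) → ℝ} (hf : Measurable f) : ∫ v, f (Q *ᵥ v) ∂μ = ∫ v, f v ∂μ := by
  conv_rhs => rw [← hμ.2.2 Q hQ]
  rw [integral_map (by fun_prop) hf.aestronglyMeasurable]

theorem integral_comp_perm (σ : Equiv.Perm (Fin p)) {f : (Fin p → ℝ) → ℝ} (hf : Measurable f) :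
    ∫ v, f (v ∘ σ) ∂μ = ∫ v, f v ∂μ := by
  have hσ : σ.permMatrix ℝ ∈ orthogonalGroup (Fin p) ℝ := by
    rw [mem_orthogonalGroup_iff, transpose_permMatrix, ← permMatrix_mul, inv_mul_cancel,
      permMatrix_one]
  simpa only [permMatrix_mulVec] using hμ.integral_comp_mulVec hσ hf

theorem integral_eq_zero_of_comp_mulVec_eq_neg {Q : Matrix (Fin p) (Fin p) ℝ}
    (hQ : Q ∈ orthogonalGroup (Fin p) ℝ) {f : (Fin p → ℝ) → ℝ} (hf : Measurable f)
    (hodd : ∀ v, f (Q *ᵥ v) = -f v) : ∫ v, f v ∂μ = 0 := by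
  have h := hμ.integral_comp_mulVec hQ hf
  simp only [hodd, integral_neg] at h
  linarith

theorem integral_sq_apply (i : Fin p) : ∫ v, v i ^ 2 ∂μ = 1 / p := by
  have := hμ.1
  have hsym : ∀ j, ∫ v, v j ^ 2 ∂μ = ∫ v, v i ^ 2 ∂μ := fun j => by
    simpa using hμ.integral_comp_perm (Equiv.swap i j) (f := fun v => v i ^ 2) (by fun_prop)
  have hsum : ∑ j, ∫ v, v j ^ 2 ∂μ = 1 := by
    rw [← integral_finsetSum _ fun j _ => hμ.integrable_of_continuous (by fun_prop)]
    rw [integral_congr_ae (g := fun _ => 1)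
      (by filter_upwards [hμ.2.1] with v hv; simpa [dotProduct, sq] using hv)]
    simp
  simp only [hsym, sum_const, card_univ, Fintype.card_fin, nsmul_eq_mul] at hsum
  rw [eq_div_iff (by exact_mod_cast (hμ.pos).ne'), mul_comm, hsum]

theorem integral_pow_four_apply_comm (i j : Fin p) : ∫ v, v j ^ 4 ∂μ = ∫ v, v i ^ 4 ∂μ := by
  simpa using hμ.integral_comp_perm (Equiv.swap i j) (f := fun v => v i ^ 4) (by fun_prop)

theorem integral_pow_three_mul_sub_mul_pow_three {i j : Fin p} (hij : i ≠ j) :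
    ∫ v, (v i ^ 3 * v j - v i * v j ^ 3) ∂μ = 0 :=
  hμ.integral_eq_zero_of_comp_mulVec_eq_neg
    (householder_mem_orthogonalGroup (n := Pi.single j 1) (by simp)) (by fun_prop)
    fun v => by simp [householder_mulVec, hij]; ring

theorem integral_pow_four_apply {i j : Fin p} (hij : i ≠ j) :
    ∫ v, v i ^ 4 ∂μ = 3 * ∫ v, v i ^ 2 * v j ^ 2 ∂μ := by
  have hint : ∀ {f : (Fin p → ℝ) → ℝ}, Continuous f → Integrable f μ :=
    hμ.integrable_of_continuous
  set n : Fin p → ℝ := Pi.single i 1 + Pi.single j 2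
  have hn : n ⬝ᵥ n = 5 := by simp [n, hij, hij.symm]; norm_num
  -- On the `(i, j)`-plane `householder n` is `(x, y) ↦ ((3x - 4y)/5, (-4x - 3y)/5)`, which
  -- sends `Re (x + iy)⁴` to `-527/625 Re (x + iy)⁴ + 336/625 Im (x + iy)⁴`.
  have hH := hμ.integral_comp_mulVec (householder_mem_orthogonalGroup (by rw [hn]; norm_num))
    (f := fun v => v i ^ 4 + v j ^ 4 - 6 * (v i ^ 2 * v j ^ 2)) (by fun_prop)
  have hrefl : ∀ v : Fin p → ℝ, (householder n *ᵥ v) i ^ 4 + (householder n *ᵥ v) j ^ 4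
      - 6 * ((householder n *ᵥ v) i ^ 2 * (householder n *ᵥ v) j ^ 2)
      = -527 / 625 * (v i ^ 4 + v j ^ 4 - 6 * (v i ^ 2 * v j ^ 2))
        + 1344 / 625 * (v i ^ 3 * v j - v i * v j ^ 3) := fun v => by
    simp [householder_mulVec, hn, n, hij, hij.symm]; ring
  simp only [hrefl] at hH
  rw [integral_add (hint (by fun_prop)) (hint (by fun_prop)), integral_const_mul,
    integral_const_mul, hμ.integral_pow_three_mul_sub_mul_pow_three hij] at hH
  have hzero : ∫ v, (v i ^ 4 + v j ^ 4 - 6 * (v i ^ 2 * v j ^ 2)) ∂μ = 0 := by linarith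
  rw [integral_sub (hint (by fun_prop)) (hint (by fun_prop)), integral_add (hint (by fun_prop))
    (hint (by fun_prop)), integral_const_mul, hμ.integral_pow_four_apply_comm i j] at hzero
  linarith

theorem integral_sq_mul_sq_apply (i j : Fin p) :
    ∫ v, v i ^ 2 * v j ^ 2 ∂μ = (if i = j then 3 else 1) / (p * (p + 2)) := by
  have hp : (0 : ℝ) < p := by exact_mod_cast hμ.pos
  have hterm : ∀ k, ∫ v, v i ^ 2 * v k ^ 2 ∂μ =
      (∫ v, v i ^ 4 ∂μ) / 3 + if k = i then 2 * (∫ v, v i ^ 4 ∂μ) / 3 else 0 := by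
    intro k
    rcases eq_or_ne k i with rfl | hk
    · simp only [if_pos, ← pow_add]; ring
    · rw [hμ.integral_pow_four_apply hk.symm, if_neg hk]; ring
  generalize ∫ v, v i ^ 4 ∂μ = a at hterm
  have hsum : ∑ k, ∫ v, v i ^ 2 * v k ^ 2 ∂μ = 1 / p := by
    rw [← integral_finsetSum _ fun k _ => hμ.integrable_of_continuous (by fun_prop),
      ← hμ.integral_sq_apply i]
    refine integral_congr_ae ?_
    filter_upwards [hμ.2.1] with v hv
    have hv' : ∑ k, v k ^ 2 = 1 := by simpa [dotProduct, sq] using hv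
    rw [← mul_sum, hv', mul_one]
  simp only [hterm, sum_add_distrib, sum_const, card_univ, Fintype.card_fin, nsmul_eq_mul,
    sum_ite_eq', mem_univ, if_true] at hsum
  have ha : a = 3 / (p * (p + 2)) := by
    field_simp at hsum ⊢; linarith
  rcases eq_or_ne i j with rfl | hij
  · rw [hterm, ha, if_pos rfl, if_pos rfl]; field_simp; ring
  · rw [hterm, ha, if_neg hij.symm, if_neg hij]; field_simp; ring

theorem integral_sum_mul_sq (c : Fin p → ℝ) :
    ∫ v, ∑ k, c k * v k ^ 2 ∂μ = (∑ k, c k) / p := by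
  rw [integral_finsetSum _ fun k _ => hμ.integrable_of_continuous (by fun_prop), sum_div]
  simp only [integral_const_mul, hμ.integral_sq_apply, mul_one_div]

theorem integral_sum_mul_sq_sq (c : Fin p → ℝ) :
    ∫ v, (∑ k, c k * v k ^ 2) ^ 2 ∂μ = ((∑ k, c k) ^ 2 + 2 * ∑ k, c k ^ 2) / (p * (p + 2)) := by
  have hexpand : ∀ v : Fin p → ℝ,
      (∑ k, c k * v k ^ 2) ^ 2 = ∑ k, ∑ l, c k * c l * (v k ^ 2 * v l ^ 2) := fun v => by
    rw [sq, sum_mul_sum]; exact sum_congr rfl fun k _ => sum_congr rfl fun l _ => by ring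
  have hint : ∀ k l, Integrable (fun v : Fin p → ℝ => c k * c l * (v k ^ 2 * v l ^ 2)) μ :=
    fun k l => hμ.integrable_of_continuous (by fun_prop)
  have hcoef : ∀ k l, c k * c l * ((if k = l then 3 else 1) / (p * (p + 2) : ℝ)) =
      (c k * c l + 2 * if k = l then c k ^ 2 else 0) / (p * (p + 2)) := fun k l => by
    split_ifs with h
    · subst h; ring
    · ring
  simp only [hexpand]
  rw [integral_finsetSum _ fun k _ => integrable_finsetSum _ fun l _ => hint k l]
  simp only [integral_finsetSum _ fun l _ => hint _ l, integral_const_mul,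
    hμ.integral_sq_mul_sq_apply, hcoef, ← sum_div, sum_add_distrib, ← mul_sum, sum_ite_eq,
    mem_univ, if_true]
  rw [sq, sum_mul_sum]
  simp only [mul_sum]

end IsUniformOnSphere

theorem IsUniformOnSphere.map_comp_mulVec {Ω : Type*} [MeasurableSpace Ω] {P : Measure Ω} {p : ℕ}
    {u : Ω → Fin p → ℝ} (hu : IsUniformOnSphere (P.map u)) (hum : Measurable u)
    {Q : Matrix (Fin p) (Fin p) ℝ} (hQ : Q ∈ orthogonalGroup (Fin p) ℝ) :
    IsUniformOnSphere (P.map fun ω => Q *ᵥ u ω) := by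
  have h := Measure.map_map (μ := P) (g := fun v => Q *ᵥ v) (by fun_prop) hum
  rw [hu.2.2 Q hQ] at h
  rwa [h] at hu

theorem ProbabilityTheory.IndepFun.variance_mul {Ω : Type*} [MeasurableSpace Ω] {μ : Measure Ω}
    [IsProbabilityMeasure μ] {X Y : Ω → ℝ} (hXY : IndepFun X Y μ) (hX : MemLp X 2 μ)
    (hY : MemLp Y 2 μ) :
    variance (fun ω => X ω * Y ω) μ =
      (∫ ω, X ω ^ 2 ∂μ) * (∫ ω, Y ω ^ 2 ∂μ) - (∫ ω, X ω ∂μ) ^ 2 * (∫ ω, Y ω ∂μ) ^ 2 := by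
  have hsq : IndepFun (fun ω => X ω ^ 2) (fun ω => Y ω ^ 2) μ :=
    hXY.comp (measurable_id.pow_const 2) (measurable_id.pow_const 2)
  have hmem : MemLp (fun ω => X ω * Y ω) 2 μ := by
    refine (memLp_two_iff_integrable_sq (f := fun ω => X ω * Y ω) (hX.1.mul hY.1)).mpr ?_
    simp only [mul_pow]
    exact hsq.integrable_mul hX.integrable_sq hY.integrable_sq
  rw [variance_eq_sub hmem]
  simp only [Pi.pow_apply, mul_pow]
  rw [hsq.integral_fun_mul_eq_mul_integral hX.integrable_sq.1 hY.integrable_sq.1,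
    hXY.integral_fun_mul_eq_mul_integral hX.1 hY.1]
  ring

theorem variance_sq_mul_sum_mul_sq {Ω : Type*} [MeasurableSpace Ω] {P : Measure Ω}
    [IsProbabilityMeasure P] {p : ℕ} {ξ : Ω → ℝ} {w : Ω → Fin p → ℝ} (hξm : Measurable ξ)
    (hwm : Measurable w) (hξ4 : Integrable (fun ω => ξ ω ^ 4) P)
    (hw : IsUniformOnSphere (P.map w)) (hind : IndepFun ξ w P) (c : Fin p → ℝ) :
    variance (fun ω => ξ ω ^ 2 * ∑ k, c k * w ω k ^ 2) P =
      (∫ ω, ξ ω ^ 4 ∂P) * (((∑ k, c k) ^ 2 + 2 * ∑ k, c k ^ 2) / (p * (p + 2))) -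
        (∫ ω, ξ ω ^ 2 ∂P) ^ 2 * ((∑ k, c k) / p) ^ 2 := by
  set q : (Fin p → ℝ) → ℝ := fun v => ∑ k, c k * v k ^ 2
  have hq : Continuous q := by fun_prop
  have hξsq : MemLp (fun ω => ξ ω ^ 2) 2 P :=
    (memLp_two_iff_integrable_sq (by fun_prop)).mpr (by simpa only [← pow_mul] using hξ4)
  have hqw : MemLp (fun ω => q (w ω)) 2 P :=
    (memLp_two_iff_integrable_sq (hq.measurable.comp hwm).aestronglyMeasurable).mpr <|
      (integrable_map_measure (hq.pow 2).aestronglyMeasurable hwm.aemeasurable).mp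
        (hw.integrable_of_continuous (hq.pow 2))
  have hE1 : ∫ ω, q (w ω) ∂P = (∑ k, c k) / p := by
    rw [← integral_map hwm.aemeasurable hq.aestronglyMeasurable, hw.integral_sum_mul_sq]
  have hE2 : ∫ ω, q (w ω) ^ 2 ∂P = ((∑ k, c k) ^ 2 + 2 * ∑ k, c k ^ 2) / (p * (p + 2)) := by
    rw [← integral_map (f := fun v => q v ^ 2) hwm.aemeasurable (hq.pow 2).aestronglyMeasurable,
      hw.integral_sum_mul_sq_sq]
  have hind' : IndepFun (fun ω => ξ ω ^ 2) (fun ω => q (w ω)) P :=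
    hind.comp (φ := fun t => t ^ 2) (by fun_prop) hq.measurable
  rw [hind'.variance_mul hξsq hqw, hE1, hE2]
  simp only [← pow_mul, Nat.reduceMul]

theorem variance_norm_sq_elliptical_general {Ω : Type*} [MeasurableSpace Ω]
    (P : Measure Ω) [IsProbabilityMeasure P] (p : ℕ)
    (ξ : Ω → ℝ) (u : Ω → Fin p → ℝ)
    (hξm : Measurable ξ) (hum : Measurable u)
    (hξ2 : ∫ ω, (ξ ω) ^ 2 ∂P = (p : ℝ))
    (hξ4 : Integrable (fun ω => (ξ ω) ^ 4) P)
    (hu : IsUniformOnSphere (P.map u))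
    (hindep : IndepFun ξ u P)
    (S : Matrix (Fin p) (Fin p) ℝ) (hS : S.PosSemidef)
    (x : Ω → Fin p → ℝ) (hx : ∀ ω, x ω = ξ ω • (hS.sqrt.mulVec (u ω))) :
    variance (fun ω => dotProduct (x ω) (x ω)) P =
      ((∫ ω, (ξ ω) ^ 4 ∂P) / ((p : ℝ) * ((p : ℝ) + 2)) - 1) * S.trace ^ 2 +
        2 * ((∫ ω, (ξ ω) ^ 4 ∂P) / ((p : ℝ) * ((p : ℝ) + 2))) * (S * S).trace := by
  set d := hS.1.eigenvalues
  set V : Matrix (Fin p) (Fin p) ℝ := star (hS.1.eigenvectorUnitary : Matrix (Fin p) (Fin p) ℝ)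
  have hV : V ∈ orthogonalGroup (Fin p) ℝ :=
    mem_orthogonalGroup_of_mem_unitaryGroup (star hS.1.eigenvectorUnitary).2
  have hnorm : (fun ω => x ω ⬝ᵥ x ω) = fun ω => ξ ω ^ 2 * ∑ k, d k * (V *ᵥ u ω) k ^ 2 := by
    funext ω
    rw [hx, smul_dotProduct, dotProduct_smul, hS.dotProduct_sqrt_mulVec_self, smul_eq_mul,
      smul_eq_mul, ← mul_assoc, ← sq]
  have htr : S.trace = ∑ k, d k := by simpa using hS.1.trace_eq_sum_eigenvalues
  have htr2 : (S * S).trace = ∑ k, d k ^ 2 := by simpa using hS.1.trace_mul_self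
  have hp : (p : ℝ) ≠ 0 := by exact_mod_cast hu.pos.ne'
  have hind : IndepFun ξ (fun ω => V *ᵥ u ω) P :=
    hindep.comp (φ := id) (ψ := fun v => V *ᵥ v) measurable_id (by fun_prop)
  rw [hnorm, variance_sq_mul_sum_mul_sq hξm (by fun_prop) hξ4 (hu.map_comp_mulVec hum hV) hind d,
    hξ2, htr, htr2]
  field_simp
  ring

/-- For x = ξ Σ^{1/2} u in an elliptical model,
Var(‖x‖²) = [E(ξ⁴)/(p(p+2)) − 1]·tr(Σ)² + 2[E(ξ⁴)/(p(p+2))]·tr(Σ²). -/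
theorem variance_norm_sq_elliptical {Ω : Type*} [MeasurableSpace Ω]
    (P : Measure Ω) [IsProbabilityMeasure P] (p : ℕ) (hp : 0 < p)
    (ξ : Ω → ℝ) (u : Ω → Fin p → ℝ)
    (hξm : Measurable ξ) (hum : Measurable u)
    (hξ0 : ∀ ω, 0 ≤ ξ ω)
    (hξ2 : ∫ ω, (ξ ω) ^ 2 ∂P = (p : ℝ))
    (hξ4 : Integrable (fun ω => (ξ ω) ^ 4) P)
    (hu : IsUniformOnSphere (P.map u))
    (hindep : IndepFun ξ u P)
    (S : Matrix (Fin p) (Fin p) ℝ) (hS : S.PosSemidef)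
    (x : Ω → Fin p → ℝ) (hx : ∀ ω, x ω = ξ ω • (hS.sqrt.mulVec (u ω))) :
    variance (fun ω => dotProduct (x ω) (x ω)) P =
      ((∫ ω, (ξ ω) ^ 4 ∂P) / ((p : ℝ) * ((p : ℝ) + 2)) - 1) * S.trace ^ 2 +
        2 * ((∫ ω, (ξ ω) ^ 4 ∂P) / ((p : ℝ) * ((p : ℝ) + 2))) * (S * S).trace :=
  variance_norm_sq_elliptical_general P p ξ u hξm hum hξ2 hξ4 hu hindep S hS x hx
end
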